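/- Any finitely generated subgroup of the special linear group SL(N, K) over a field K is residually finite. -/

import Mathlib

lemma int_jacobson : IsJacobsonRing ℤ := by
  rw [isJacobsonRing_iff_prime_eq]
  intro P hP
  rcases eq_or_ne P ⊥ with rfl | hne
  · refine eq_bot_iff.mpr fun x hx => ?_
    rw [Ideal.mem_jacobson_bot] at hx
    have h := Int.isUnit_iff.mp (hx x)
    have hx0 : x = 0 := by rcases h with h | h <;> nlinarith [sq_nonneg x]
    simp [hx0]
  · haveI := IsPrime.to_maximal_ideal hne
    exact Ideal.jacobson_eq_self_of_isMaximal

lemma finite_of_field_finite_int (F : Type*) [Field F] [Module.Finite ℤ F] : Finite F := by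
  rcases CharP.char_is_prime_or_zero F (ringChar F) with hp | h0
  · haveI : Fact (Nat.Prime (ringChar F)) := ⟨hp⟩
    haveI : Algebra (ZMod (ringChar F)) F := ZMod.algebra F (ringChar F)
    haveI : Module.Finite (ZMod (ringChar F)) F :=
      Module.Finite.of_restrictScalars_finite ℤ (ZMod (ringChar F)) F
    exact Module.finite_of_finite (ZMod (ringChar F))
  · haveI : CharP F 0 := h0 ▸ ringChar.charP F
    haveI : CharZero F := CharP.charP_to_charZero F
    haveI : Algebra.IsIntegral ℤ F := Algebra.IsIntegral.of_finite ℤ F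
    have h2 : IsIntegral ℤ ((algebraMap ℚ F) (1/2)) := Algebra.IsIntegral.isIntegral _
    rw [isIntegral_algebraMap_iff ((algebraMap ℚ F).injective)] at h2
    obtain ⟨y, hy⟩ := IsIntegrallyClosed.isIntegral_iff.mp h2
    have h1 : ((2 * y : ℤ) : ℚ) = 1 := by
      push_cast
      rw [show ((y : ℚ)) = 1/2 from hy]
      ring
    have : (2 * y : ℤ) = 1 := by exact_mod_cast h1
    omega

lemma quot_finite (R : Type*) [CommRing R] [Algebra.FiniteType ℤ R]
    (M : Ideal R) [M.IsMaximal] : Finite (R ⧸ M) := by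
  haveI := int_jacobson
  have h0 : Algebra.FiniteType ℤ (R ⧸ M) :=
    Algebra.FiniteType.of_surjective (Ideal.Quotient.mkₐ ℤ M)
      (Ideal.Quotient.mkₐ_surjective ℤ M)
  have hf := @finite_of_finite_type_of_isJacobsonRing ℤ (R ⧸ M) _ (Ideal.Quotient.field M) _ _ h0
  exact @finite_of_field_finite_int (R ⧸ M) (Ideal.Quotient.field M) hf

open Matrix in
set_option maxHeartbeats 2000000 in
/-- Any finitely generated subgroup of `SL(N, K)` over a field `K` is residually finite:
for every nontrivial element there is a homomorphism to a finite group not killing it. -/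
theorem stmt0 (K : Type) [Field K] (N : ℕ)
    (H : Subgroup (Matrix.SpecialLinearGroup (Fin N) K)) (hfg : Group.FG H) :
    ∀ g : H, g ≠ 1 →
      ∃ (F : Type) (_ : Group F) (_ : Finite F) (φ : H →* F), φ g ≠ 1 := by
  classical
  intro g hg
  obtain ⟨S, hS⟩ := (Group.fg_iff_subgroup_fg H).mp hfg
  set T : Set K := ⋃ m ∈ (S : Set (SpecialLinearGroup (Fin N) K)),
      Set.range (fun p : Fin N × Fin N => (m : Matrix (Fin N) (Fin N) K) p.1 p.2) with hT
  have hTfin : T.Finite := S.finite_toSet.biUnion fun _ _ => Set.finite_range _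
  set R₀ : Subalgebra ℤ K := Algebra.adjoin ℤ T with hR₀
  haveI hft : Algebra.FiniteType ℤ R₀ :=
    (Subalgebra.fg_iff_finiteType R₀).mp (Subalgebra.fg_def.mpr ⟨T, hTfin, rfl⟩)
  haveI := int_jacobson
  haveI : IsJacobsonRing R₀ := isJacobsonRing_of_finiteType (A := ℤ)
  -- the subgroup of matrices with entries in R₀
  set P : Subgroup (SpecialLinearGroup (Fin N) K) :=
    { carrier := {m | ∀ i j, (m : Matrix (Fin N) (Fin N) K) i j ∈ R₀}
      one_mem' := by
        intro i j
        rw [Matrix.SpecialLinearGroup.coe_one, Matrix.one_apply]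
        split_ifs
        exacts [one_mem _, zero_mem _]
      mul_mem' := by
        intro a b ha hb i j
        rw [Matrix.SpecialLinearGroup.coe_mul, Matrix.mul_apply]
        exact Subalgebra.sum_mem _ fun k _ => mul_mem (ha i k) (hb k j)
      inv_mem' := by
        intro m hm i j
        set B : Matrix (Fin N) (Fin N) R₀ :=
          Matrix.of (fun i j => (⟨(m : Matrix (Fin N) (Fin N) K) i j, hm i j⟩ : R₀)) with hB
        have hfB : (algebraMap R₀ K).mapMatrix B = (m : Matrix (Fin N) (Fin N) K) := by
          ext i j; rfl
        rw [Matrix.SpecialLinearGroup.coe_inv, ← hfB, ← RingHom.map_adjugate]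
        exact SetLike.coe_mem _ } with hP
  have hHP : H ≤ P := by
    rw [← hS]
    refine (Subgroup.closure_le P).mpr ?_
    intro m hm i j
    exact Algebra.subset_adjoin (Set.mem_biUnion hm ⟨(i, j), rfl⟩)
  have hmem : ∀ i j, ((g : SpecialLinearGroup (Fin N) K) : Matrix (Fin N) (Fin N) K) i j ∈ R₀ :=
    hHP g.2
  have hne1 : ((g : SpecialLinearGroup (Fin N) K) : Matrix (Fin N) (Fin N) K)
      ≠ (1 : Matrix (Fin N) (Fin N) K) := by
    intro h
    apply hg
    apply Subtype.ext
    apply Subtype.ext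
    simpa using h
  obtain ⟨i, hi⟩ := Function.ne_iff.mp hne1
  obtain ⟨j, hij⟩ := Function.ne_iff.mp hi
  have h1mem : (1 : Matrix (Fin N) (Fin N) K) i j ∈ R₀ := by
    rw [Matrix.one_apply]; split_ifs; exacts [one_mem _, zero_mem _]
  set a : R₀ := ⟨((g : SpecialLinearGroup (Fin N) K) : Matrix (Fin N) (Fin N) K) i j
      - (1 : Matrix (Fin N) (Fin N) K) i j, sub_mem (hmem i j) h1mem⟩ with ha
  have ha0 : a ≠ 0 := by
    intro h
    exact hij (sub_eq_zero.mp (congrArg Subtype.val h))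
  have hjac : Ideal.jacobson (⊥ : Ideal R₀) = ⊥ := by
    rw [← Ideal.radical_eq_jacobson]
    exact Ideal.radical_bot_of_noZeroDivisors
  have hnot : a ∉ Ideal.jacobson (⊥ : Ideal R₀) := by
    rw [hjac]; simpa using ha0
  rw [Ideal.jacobson, Ideal.mem_sInf] at hnot
  push_neg at hnot
  obtain ⟨M, ⟨-, hMmax⟩, haM⟩ := hnot
  haveI : M.IsMaximal := hMmax
  haveI : Finite (R₀ ⧸ M) := quot_finite R₀ M
  haveI hFfin : Finite (SpecialLinearGroup (Fin N) (R₀ ⧸ M)) := by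
    unfold Matrix.SpecialLinearGroup
    infer_instance
  -- lift elements of P to SL over R₀
  have key : ∀ m : P, ∃ B : SpecialLinearGroup (Fin N) R₀,
      (algebraMap R₀ K).mapMatrix (B : Matrix (Fin N) (Fin N) R₀)
        = ((m : SpecialLinearGroup (Fin N) K) : Matrix (Fin N) (Fin N) K) := by
    intro m
    set B0 : Matrix (Fin N) (Fin N) R₀ := Matrix.of
      (fun i j => (⟨((m : SpecialLinearGroup (Fin N) K) : Matrix (Fin N) (Fin N) K) i j,
        m.2 i j⟩ : R₀)) with hB0
    have hfB : (algebraMap R₀ K).mapMatrix B0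
        = ((m : SpecialLinearGroup (Fin N) K) : Matrix (Fin N) (Fin N) K) := by
      ext i j; rfl
    have hdet : B0.det = 1 := by
      have hinj : Function.Injective (algebraMap R₀ K) := Subtype.val_injective
      apply hinj
      rw [RingHom.map_det, hfB, (algebraMap R₀ K).map_one]
      exact (m : SpecialLinearGroup (Fin N) K).2
    exact ⟨⟨B0, hdet⟩, hfB⟩
  choose lift hlift using key
  have hinjM : Function.Injective fun B : Matrix (Fin N) (Fin N) R₀ =>
      (algebraMap R₀ K).mapMatrix B := by
    intro B C h
    ext i j
    have h2 := congrArg (fun M : Matrix (Fin N) (Fin N) K => M i j) h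
    simp only [RingHom.mapMatrix_apply, Matrix.map_apply] at h2
    exact h2
  -- lift is a group hom
  set φ₀ : P →* SpecialLinearGroup (Fin N) R₀ :=
    { toFun := lift
      map_one' := by
        apply Subtype.ext
        apply hinjM
        show (algebraMap R₀ K).mapMatrix _ = (algebraMap R₀ K).mapMatrix _
        rw [hlift]
        simp
        exact (Matrix.map_one _ (map_zero _) (map_one _)).symm
      map_mul' := by
        intro x y
        apply Subtype.ext
        apply hinjM
        show (algebraMap R₀ K).mapMatrix _ = (algebraMap R₀ K).mapMatrix _
        rw [hlift]
        have hcm : ((lift x * lift y : SpecialLinearGroup (Fin N) R₀) :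
            Matrix (Fin N) (Fin N) R₀)
            = (lift x : Matrix (Fin N) (Fin N) R₀) * (lift y : Matrix (Fin N) (Fin N) R₀) := rfl
        rw [hcm, _root_.map_mul, hlift, hlift]
        rfl } with hφ₀
  refine ⟨SpecialLinearGroup (Fin N) (R₀ ⧸ M), inferInstance, hFfin,
    (SpecialLinearGroup.map (Ideal.Quotient.mk M)).comp (φ₀.comp (Subgroup.inclusion hHP)), ?_⟩
  intro hcontra
  apply haM
  -- extract the (i,j) entry
  have hcoe := congrArg (fun m : SpecialLinearGroup (Fin N) (R₀ ⧸ M) =>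
    (m : Matrix (Fin N) (Fin N) (R₀ ⧸ M)) i j) hcontra
  simp only [MonoidHom.comp_apply, SpecialLinearGroup.coe_one, Matrix.one_apply] at hcoe
  -- entries of the lift
  have hentry : ∀ i' j', ((lift (Subgroup.inclusion hHP g) : Matrix (Fin N) (Fin N) R₀) i' j' : K)
      = ((g : SpecialLinearGroup (Fin N) K) : Matrix (Fin N) (Fin N) K) i' j' := by
    intro i' j'
    have h2 := congrArg (fun M : Matrix (Fin N) (Fin N) K => M i' j')
      (hlift (Subgroup.inclusion hHP g))
    simp only [RingHom.mapMatrix_apply, Matrix.map_apply] at h2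
    exact h2
  have hmk : (Ideal.Quotient.mk M) ((lift (Subgroup.inclusion hHP g) :
      Matrix (Fin N) (Fin N) R₀) i j) = if i = j then 1 else 0 := by
    have : ((SpecialLinearGroup.map (Ideal.Quotient.mk M)) (lift (Subgroup.inclusion hHP g))
        : Matrix (Fin N) (Fin N) (R₀ ⧸ M)) i j
        = (Ideal.Quotient.mk M) ((lift (Subgroup.inclusion hHP g) :
          Matrix (Fin N) (Fin N) R₀) i j) := rfl
    rw [← this]
    exact hcoe
  -- now show a ∈ M
  have haval : a = (lift (Subgroup.inclusion hHP g) : Matrix (Fin N) (Fin N) R₀) i j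
      - (⟨(1 : Matrix (Fin N) (Fin N) K) i j, h1mem⟩ : R₀) := by
    apply Subtype.ext
    simp only [ha, AddSubgroupClass.coe_sub]
    rw [hentry i j]
  have h1q : (Ideal.Quotient.mk M) (⟨(1 : Matrix (Fin N) (Fin N) K) i j, h1mem⟩ : R₀)
      = if i = j then 1 else 0 := by
    by_cases h : i = j
    · have : (⟨(1 : Matrix (Fin N) (Fin N) K) i j, h1mem⟩ : R₀) = 1 := by
        apply Subtype.ext; simp [Matrix.one_apply, h]
      rw [this, _root_.map_one, if_pos h]
    · have : (⟨(1 : Matrix (Fin N) (Fin N) K) i j, h1mem⟩ : R₀) = 0 := by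
        apply Subtype.ext; simp [Matrix.one_apply, h]
      rw [this, _root_.map_zero, if_neg h]
  rw [← Ideal.Quotient.eq_zero_iff_mem, haval, (Ideal.Quotient.mk M).map_sub, hmk, h1q, sub_self]
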